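/- arXiv:1805.02274 — 3 statements merged into one kernel-verified Lean document; each statement's English description precedes it below -/
import Mathlib

section
/- For every integer r, the matrix with entries h_{n,k} = ∑_{j=0}^{k} C(k,j) * C(n-j, n-k-j) * r^j is Pascal-like: h_{n,0} = 1, h_{n,n} = 1, and h_{n,n-k} = h_{n,k} for all 0 ≤ k ≤ n. -/
/-- The binomial coefficient with integer arguments, `0` when `b > a` or `b < 0`. -/
def ch (a b : ℤ) : ℤ := if 0 ≤ b ∧ b ≤ a then (a.toNat.choose b.toNat : ℤ) else 0

lemma key (n k j : ℕ) (hj : j ≤ k) (hj2 : k + j ≤ n) :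
    Nat.choose k j * Nat.choose (n - j) (n - k - j) =
      Nat.choose (n - k) j * Nat.choose (n - j) (k - j) := by
  have h1 : n - k - j = (n - j) - k := by omega
  have h2 : k - j = (n - j) - (n - k) := by omega
  rw [h1, Nat.choose_symm (by omega), h2, Nat.choose_symm (by omega)]
  rw [mul_comm (Nat.choose k j), Nat.choose_mul hj,
      mul_comm (Nat.choose (n - k) j), Nat.choose_mul (by omega)]
  congr 1
  have h3 : n - k - j = (n - j - j) - (k - j) := by omega
  rw [h3, Nat.choose_symm (by omega)]

lemma ch_eq_choose (a b : ℕ) (h : b ≤ a) : ch a b = Nat.choose a b := by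
  simp [ch, Int.ofNat_le.mpr h]

lemma ch_zero_of_gt (a : ℤ) {b : ℤ} (h : ¬ (0 ≤ b ∧ b ≤ a)) : ch a b = 0 := by
  simp [ch, h]

lemma ch_self (a : ℕ) : ch a a = 1 := by simp [ch]

lemma ch_zero (a : ℕ) : ch a 0 = 1 := by simp [ch]

lemma chkey (n k j : ℕ) (hk : k ≤ n) :
    ch ((n - k : ℕ) : ℤ) j * ch ((n : ℤ) - j) ((n : ℤ) - ((n - k : ℕ) : ℤ) - j) =
      ch (k : ℤ) j * ch ((n : ℤ) - j) ((n : ℤ) - k - j) := by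
  have hc : ((n - k : ℕ) : ℤ) = (n : ℤ) - k := by omega
  rw [hc, show (n : ℤ) - ((n : ℤ) - k) - j = (k : ℤ) - j by ring]
  by_cases h1 : j ≤ k
  · by_cases h2 : k + j ≤ n
    · have e1 : ch (k : ℤ) j = Nat.choose k j := ch_eq_choose _ _ h1
      have e2 : ch ((n : ℤ) - j) ((n : ℤ) - k - j) = Nat.choose (n - j) (n - k - j) := by
        rw [show (n : ℤ) - j = ((n - j : ℕ) : ℤ) by omega,
            show (n : ℤ) - k - j = ((n - k - j : ℕ) : ℤ) by omega]
        exact ch_eq_choose _ _ (by omega)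
      have e3 : ch ((n : ℤ) - k) j = Nat.choose (n - k) j := by
        rw [show (n : ℤ) - k = ((n - k : ℕ) : ℤ) by omega]
        exact ch_eq_choose _ _ (by omega)
      have e4 : ch ((n : ℤ) - j) ((k : ℤ) - j) = Nat.choose (n - j) (k - j) := by
        rw [show (n : ℤ) - j = ((n - j : ℕ) : ℤ) by omega,
            show (k : ℤ) - j = ((k - j : ℕ) : ℤ) by omega]
        exact ch_eq_choose _ _ (by omega)
      rw [e1, e2, e3, e4]
      exact_mod_cast (key n k j h1 h2).symm
    · have A : ch ((n : ℤ) - k) j = 0 := by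
        apply ch_zero_of_gt; push_neg; intro _; omega
      have B : ch ((n : ℤ) - j) ((n : ℤ) - k - j) = 0 := by
        apply ch_zero_of_gt; push_neg; intro h'; exfalso; omega
      rw [A, B]; ring
  · have A : ch ((n : ℤ) - j) ((k : ℤ) - j) = 0 := by
      apply ch_zero_of_gt; push_neg; intro h'; exfalso; omega
    have B : ch (k : ℤ) j = 0 := by
      apply ch_zero_of_gt; push_neg; intro _; omega
    rw [A, B]; ring

/-- The matrix `h n k = ∑_{j=0}^k C(k,j) C(n-j, n-k-j) r^j` is Pascal-like:
first column and diagonal are `1`, and the rows are palindromic. -/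
theorem h_matrix_pascal_like (r : ℤ) (h : ℕ → ℕ → ℤ)
    (hdef : ∀ n k : ℕ, h n k =
      ∑ j ∈ Finset.range (k + 1),
        ch (k : ℤ) (j : ℤ) * ch ((n : ℤ) - j) ((n : ℤ) - k - j) * r ^ j) :
    ∀ n k : ℕ, k ≤ n → h n 0 = 1 ∧ h n n = 1 ∧ h n (n - k) = h n k := by
  intro n k hk
  refine ⟨?_, ?_, ?_⟩
  · rw [hdef, Finset.sum_range_one]
    norm_num [ch]
  · rw [hdef]
    rw [Finset.sum_eq_single 0]
    · norm_num [ch]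
    · intro j hj hj0
      have : ch ((n:ℤ) - j) ((n:ℤ) - n - j) = 0 := by
        apply ch_zero_of_gt; push_neg; intro h2; exfalso; omega
      rw [this, mul_zero, zero_mul]
    · simp
  · rw [hdef, hdef]
    have ext : ∀ m : ℕ, m ≤ n →
        (∑ j ∈ Finset.range (m + 1),
          ch (m : ℤ) j * ch ((n : ℤ) - j) ((n : ℤ) - m - j) * r ^ j) =
        ∑ j ∈ Finset.range (n + 1),
          ch (m : ℤ) j * ch ((n : ℤ) - j) ((n : ℤ) - m - j) * r ^ j := by
      intro m hm
      apply Finset.sum_subset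
      · intro x hx; simp at hx ⊢; omega
      · intro x hx hx2
        simp at hx hx2
        have : ch (m : ℤ) x = 0 := by
          apply ch_zero_of_gt; push_neg; intro _; omega
        rw [this, zero_mul, zero_mul]
    rw [ext (n - k) (by omega), ext k hk]
    apply Finset.sum_congr rfl
    intro j _
    rw [chkey n k j hk]
end

section
/- For every integer r, the (n,k) entry of the ordinary Riordan array (1/(1-x), x(1+rx)/(1-x)), i.e., [x^n] (1/(1-x)) * (x(1+rx)/(1-x))^k, equals ∑_{j=0}^{k} C(k,j) * C(n-j, n-k-j) * r^j. -/
open PowerSeries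

lemma coeff_one_add_pow (c : ℚ) (k j : ℕ) :
    PowerSeries.coeff (R := ℚ) j ((1 + C (R := ℚ) c * X) ^ k) = (k.choose j : ℚ) * c ^ j := by
  rw [add_comm, add_pow, map_sum]
  have hterm : ∀ m : ℕ, ((C (R := ℚ) c * X) ^ m * 1 ^ (k - m) * ((k.choose m : ℕ) : ℚ⟦X⟧))
      = C (R := ℚ) (c ^ m * (k.choose m : ℚ)) * X ^ m := by
    intro m
    rw [← map_natCast (C (R := ℚ)), one_pow, mul_one, mul_pow, ← map_pow, map_mul]
    ring
  simp only [hterm, coeff_C_mul, coeff_X_pow]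
  rw [Finset.sum_eq_single j]
  · simp [mul_comm]
  · intro m _ hm
    rw [if_neg (fun hEq => hm hEq.symm), mul_zero]
  · intro h
    simp only [Finset.mem_range, not_lt] at h
    simp [Nat.choose_eq_zero_of_lt (by omega : k < j)]

/-- The `(n,k)` entry of the Riordan array `(1/(1-x), x(1+rx)/(1-x))` is
`∑_{j=0}^k C(k,j) C(n-j, n-k-j) r^j`. -/
theorem riordan_entry_h_matrix (r : ℤ) (n k : ℕ) :
    PowerSeries.coeff (R := ℚ) n ((1 - X)⁻¹ * (X * (1 + C (R := ℚ) (r : ℚ) * X) * (1 - X)⁻¹) ^ k) =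
      ((∑ j ∈ Finset.range (k + 1),
        ch (k : ℤ) (j : ℤ) * ch ((n : ℤ) - j) ((n : ℤ) - k - j) * r ^ j : ℤ) : ℚ) := by
  have hinv : (1 - X : ℚ⟦X⟧)⁻¹ = mk 1 := by
    symm
    rw [PowerSeries.eq_inv_iff_mul_eq_one (by simp)]
    exact mk_one_mul_one_sub_eq_one ℚ
  have key : (1 - X : ℚ⟦X⟧)⁻¹ * (X * (1 + C (R := ℚ) (r : ℚ) * X) * (1 - X)⁻¹) ^ k
      = X ^ k * ((1 + C (R := ℚ) (r : ℚ) * X) ^ k * mk (fun m => ((k + m).choose k : ℚ))) := by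
    rw [hinv, ← mk_one_pow_eq_mk_choose_add, mul_pow, mul_pow, pow_succ]
    ring
  rw [key]
  by_cases hkn : k ≤ n
  · -- Both sides equal `∑ j ∈ range (n+1), C(k,j) C(n-j,k) r^j`.
    have hR : ((∑ j ∈ Finset.range (k + 1),
          ch (k : ℤ) (j : ℤ) * ch ((n : ℤ) - j) ((n : ℤ) - k - j) * r ^ j : ℤ) : ℚ)
        = ∑ j ∈ Finset.range (n + 1),
            (k.choose j : ℚ) * ((n - j).choose k : ℚ) * (r : ℚ) ^ j := by
      rw [Int.cast_sum,
        Finset.sum_subset (Finset.range_subset_range.2 (by omega : k + 1 ≤ n + 1))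
          (fun j hjm hj => by
            simp only [Finset.mem_range, not_lt] at hjm hj
            have hc : ch (k : ℤ) (j : ℤ) = 0 := by
              rw [ch, if_neg]; push_neg; intro _; omega
            rw [hc]; push_cast; ring)]
      refine Finset.sum_congr rfl (fun j hj => ?_)
      simp only [Finset.mem_range] at hj
      by_cases hjk : j ≤ k
      · by_cases hjnk : j ≤ n - k
        · have h1 : ch (k : ℤ) (j : ℤ) = (k.choose j : ℤ) := by
            rw [ch, if_pos ⟨by positivity, by omega⟩]
            norm_num
          have h2 : ch ((n : ℤ) - j) ((n : ℤ) - k - j) = ((n - j).choose k : ℤ) := by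
            rw [ch, if_pos ⟨by omega, by omega⟩]
            rw [show ((n : ℤ) - j).toNat = n - j by omega,
              show ((n : ℤ) - k - j).toNat = (n - j) - k by omega,
              Nat.choose_symm (by omega)]
          rw [h1, h2]; push_cast; ring
        · have h2 : ch ((n : ℤ) - j) ((n : ℤ) - k - j) = 0 := by
            rw [ch, if_neg]; push_neg; intro _; omega
          rw [h2, Nat.choose_eq_zero_of_lt (by omega : n - j < k)]
          push_cast; ring
      · have h1 : ch (k : ℤ) (j : ℤ) = 0 := by
          rw [ch, if_neg]; push_neg; intro _; omega
        rw [h1, Nat.choose_eq_zero_of_lt (by omega : k < j)]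
        push_cast; ring
    rw [hR, coeff_X_pow_mul', if_pos hkn, coeff_mul,
      Finset.Nat.sum_antidiagonal_eq_sum_range_succ
        (f := fun a b => PowerSeries.coeff (R := ℚ) a ((1 + C (R := ℚ) (r : ℚ) * X) ^ k) *
          PowerSeries.coeff (R := ℚ) b (mk (fun m => ((k + m).choose k : ℚ))))]
    simp only [coeff_mk, coeff_one_add_pow]
    refine Eq.trans (Finset.sum_congr rfl fun j hj => ?_)
      (Finset.sum_subset (Finset.range_subset_range.2 (by omega : n - k + 1 ≤ n + 1))
        fun j hjm hj => ?_)
    · simp only [Finset.mem_range] at hj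
      rw [show k + (n - k - j) = n - j by omega]
      ring
    · simp only [Finset.mem_range, not_lt] at hjm hj
      rw [Nat.choose_eq_zero_of_lt (by omega : n - j < k)]
      ring
  · -- n < k : both sides are zero
    rw [coeff_X_pow_mul', if_neg hkn]
    symm
    rw [Int.cast_sum]
    refine Finset.sum_eq_zero (fun j hj => ?_)
    have h2 : ch ((n : ℤ) - j) ((n : ℤ) - k - j) = 0 := by
      rw [ch, if_neg]; push_neg; intro _; omega
    rw [h2]; push_cast; ring
end

section
/- The ordinary generating function of the aerated double factorials a_{2m} = (2m)!/(2^m m!), a_{2m+1} = 0 is given by the Jacobi continued fraction 1/(1 - x^2/(1 - 2x^2/(1 - 3x^2/(1 - ...)))); equivalently, the n-th convergent of this continued fraction agrees with ∑ a_j x^j to order x^{n+1}. -/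
open PowerSeries

/-- `cfAux d i` is the depth-`d` truncation of the continued fraction
`1/(1 - i x²/(1 - (i+1) x²/(1 - ...)))` over `ℚ`. -/
noncomputable def cfAux : ℕ → ℕ → PowerSeries ℚ
  | 0, _ => 1
  | d + 1, i => (1 - C (i : ℚ) * X ^ 2 * cfAux d (i + 1))⁻¹

/-- Generalized aerated double factorial coefficients. -/
noncomputable def dfc (i j : ℕ) : ℚ :=
  if j % 2 = 0 then
    ((j + i).factorial : ℚ) / (2 ^ (j / 2) * ((j / 2).factorial : ℚ) * (i.factorial : ℚ))
  else 0

/-- The tail series of the continued fraction. -/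
noncomputable def uS : ℕ → PowerSeries ℚ
  | 0 => 1
  | i + 1 => PowerSeries.mk (dfc i)

lemma dfc_zero (i : ℕ) : dfc i 0 = 1 := by
  simp only [dfc, Nat.zero_mod, if_true, Nat.zero_div, Nat.zero_add, Nat.factorial_zero,
    Nat.cast_one, pow_zero, one_mul]
  exact div_self (Nat.cast_ne_zero.mpr i.factorial_ne_zero)

lemma dfc_odd (i t : ℕ) : dfc i (2 * t + 1) = 0 := by
  have : (2 * t + 1) % 2 = 1 := by omega
  simp [dfc, this]

lemma constantCoeff_uS (i : ℕ) : constantCoeff (uS i) = 1 := by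
  cases i with
  | zero => simp [uS]
  | succ i =>
    rw [← coeff_zero_eq_constantCoeff_apply]
    simp [uS, dfc_zero]

lemma dfc_rec (k t : ℕ) :
    dfc k (2 * t + 2) = dfc (k + 1) (2 * t + 2) - ((k : ℚ) + 2) * dfc (k + 2) (2 * t) := by
  have h1 : (2 * t + 2) % 2 = 0 := by omega
  have h2 : (2 * t) % 2 = 0 := by omega
  have h3 : (2 * t + 2) / 2 = t + 1 := by omega
  have h4 : (2 * t) / 2 = t := by omega
  have e1 : 2 * t + 2 + k = (2 * t + 1 + k) + 1 := by ring
  have e2 : 2 * t + 2 + (k + 1) = (2 * t + 2 + k) + 1 := by ring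
  have e3 : 2 * t + (k + 2) = 2 * t + 2 + k := by ring
  simp only [dfc, h1, h2, h3, h4, if_true]
  rw [e2, e3]
  have hf : ∀ m : ℕ, ((m.factorial : ℚ)) ≠ 0 := fun m => Nat.cast_ne_zero.mpr m.factorial_ne_zero
  rw [Nat.factorial_succ (2 * t + 2 + k), Nat.factorial_succ k, Nat.factorial_succ (k+1),
    Nat.factorial_succ k, Nat.factorial_succ t]
  push_cast
  field_simp
  ring

lemma dfc_base (t : ℕ) : dfc 0 (2 * t + 2) = dfc 1 (2 * t) := by
  have h1 : (2 * t + 2) % 2 = 0 := by omega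
  have h2 : (2 * t) % 2 = 0 := by omega
  have h3 : (2 * t + 2) / 2 = t + 1 := by omega
  have h4 : (2 * t) / 2 = t := by omega
  have e1 : 2 * t + 2 + 0 = (2 * t + 1) + 1 := by ring
  have e2 : 2 * t + 1 = 2 * t + 1 := rfl
  simp only [dfc, h1, h2, h3, h4, if_true]
  rw [e1, Nat.factorial_succ (2 * t + 1), Nat.factorial_succ t]
  push_cast
  have hf : ∀ m : ℕ, ((m.factorial : ℚ)) ≠ 0 := fun m => Nat.cast_ne_zero.mpr m.factorial_ne_zero
  field_simp
  ring

lemma coeff_sub_form (c : ℚ) (f g _h : PowerSeries ℚ) (j : ℕ) :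
    (coeff j) (f - C c * X ^ 2 * g) =
      coeff j f - c * (if 2 ≤ j then coeff (j - 2) g else 0) := by
  rw [map_sub, mul_assoc, coeff_C_mul, coeff_X_pow_mul']

lemma coeff_uS_succ (i j : ℕ) : coeff j (uS (i + 1)) = dfc i j := by
  simp [uS]

lemma coeff_uS_zero (j : ℕ) : coeff j (uS 0) = if j = 0 then 1 else 0 := by
  simp [uS, coeff_one]

lemma coeff_uS_odd (i t : ℕ) : coeff (2 * t + 1) (uS i) = 0 := by
  cases i with
  | zero => simp [coeff_uS_zero]
  | succ i => rw [coeff_uS_succ, dfc_odd]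

lemma uS_rec (i : ℕ) : uS i = uS (i + 1) - C ((i : ℚ) + 1) * X ^ 2 * uS (i + 2) := by
  ext j
  rw [coeff_sub_form _ _ _ (uS (i + 2))]
  rcases Nat.even_or_odd j with ⟨t, ht⟩ | ⟨t, ht⟩
  · have ht' : j = 2 * t := by omega
    subst ht'
    cases t with
    | zero =>
      have : ¬ (2 ≤ 2 * 0) := by omega
      rw [if_neg this]
      rw [show (2 * 0 : ℕ) = 0 from rfl, coeff_zero_eq_constantCoeff_apply,
        coeff_zero_eq_constantCoeff_apply, constantCoeff_uS, constantCoeff_uS]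
      ring
    | succ s =>
      have h2 : 2 ≤ 2 * (s + 1) := by omega
      rw [if_pos h2]
      have e : 2 * (s + 1) = 2 * s + 2 := by ring
      have e2 : 2 * s + 2 - 2 = 2 * s := by omega
      rw [e, e2]
      cases i with
      | zero =>
        rw [coeff_uS_zero, if_neg (by omega), coeff_uS_succ, coeff_uS_succ, dfc_base]
        norm_num
      | succ k =>
        rw [coeff_uS_succ, coeff_uS_succ, coeff_uS_succ, dfc_rec k s]
        push_cast
        ring
  · subst ht
    have e : 2 * t + 1 = 2 * t + 1 := rfl
    rw [coeff_uS_odd, coeff_uS_odd]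
    cases t with
    | zero =>
      rw [if_neg (by omega)]
      ring
    | succ s =>
      rw [if_pos (by omega)]
      have e2 : 2 * (s + 1) + 1 - 2 = 2 * s + 1 := by omega
      rw [e2, coeff_uS_odd]
      ring

lemma constantCoeff_uS_ne (i : ℕ) : constantCoeff (uS i) ≠ 0 := by
  rw [constantCoeff_uS]; norm_num

lemma tail (i : ℕ) :
    uS (i + 1) * (uS i)⁻¹ =
      (1 - C ((i : ℚ) + 1) * X ^ 2 * (uS (i + 2) * (uS (i + 1))⁻¹))⁻¹ := by
  have hD : constantCoeff (1 - C ((i : ℚ) + 1) * X ^ 2 * (uS (i + 2) * (uS (i + 1))⁻¹)) ≠ 0 := by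
    simp [map_sub, map_mul]
  rw [eq_inv_iff_mul_eq_one hD]
  have key : (1 - C ((i : ℚ) + 1) * X ^ 2 * (uS (i + 2) * (uS (i + 1))⁻¹))
      = uS i * (uS (i + 1))⁻¹ := by
    conv_rhs => rw [uS_rec i]
    rw [sub_mul]
    have : uS (i + 1) * (uS (i + 1))⁻¹ = 1 := PowerSeries.mul_inv_cancel _ (constantCoeff_uS_ne _)
    rw [this]
    ring
  rw [key]
  have h1 : uS (i + 1) * (uS (i + 1))⁻¹ = 1 := PowerSeries.mul_inv_cancel _ (constantCoeff_uS_ne _)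
  have h2 : uS i * (uS i)⁻¹ = 1 := PowerSeries.mul_inv_cancel _ (constantCoeff_uS_ne _)
  calc uS (i + 1) * (uS i)⁻¹ * (uS i * (uS (i + 1))⁻¹)
      = (uS (i + 1) * (uS (i + 1))⁻¹) * (uS i * (uS i)⁻¹) := by ring
    _ = 1 := by rw [h1, h2, one_mul]

lemma key_dvd : ∀ d i : ℕ, (X : PowerSeries ℚ) ^ (d + 1) ∣
    (cfAux d (i + 1) - uS (i + 1) * (uS i)⁻¹) := by
  intro d
  induction d with
  | zero =>
    intro i
    rw [pow_one, X_dvd_iff]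
    simp only [cfAux, map_sub, map_mul, constantCoeff_inv, constantCoeff_uS]
    norm_num
  | succ d ih =>
    intro i
    have hcf : cfAux (d + 1) (i + 1)
        = (1 - C ((i : ℚ) + 1) * X ^ 2 * cfAux d (i + 2))⁻¹ := by
      show (1 - C ((i + 1 : ℕ) : ℚ) * X ^ 2 * cfAux d (i + 1 + 1))⁻¹ = _
      push_cast
      rfl
    set B := 1 - C ((i : ℚ) + 1) * X ^ 2 * cfAux d (i + 2) with hB
    set D := 1 - C ((i : ℚ) + 1) * X ^ 2 * (uS (i + 2) * (uS (i + 1))⁻¹) with hD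
    have hBc : constantCoeff B ≠ 0 := by
      rw [hB]; simp [map_sub, map_mul]
    have hDc : constantCoeff D ≠ 0 := by
      rw [hD]; simp [map_sub, map_mul]
    have hBi : B * B⁻¹ = 1 := PowerSeries.mul_inv_cancel _ hBc
    have hDi : D * D⁻¹ = 1 := PowerSeries.mul_inv_cancel _ hDc
    have hdiff : cfAux (d + 1) (i + 1) - uS (i + 1) * (uS i)⁻¹
        = B⁻¹ * (D - B) * D⁻¹ := by
      rw [hcf, tail i]
      calc B⁻¹ - D⁻¹ = B⁻¹ * (D * D⁻¹) - (B * B⁻¹) * D⁻¹ := by rw [hBi, hDi]; ring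
        _ = B⁻¹ * (D - B) * D⁻¹ := by ring
    obtain ⟨g, hg⟩ := ih (i + 1)
    have hDB : D - B = C ((i : ℚ) + 1) * X ^ 2 *
        (cfAux d (i + 2) - uS (i + 2) * (uS (i + 1))⁻¹) := by
      rw [hB, hD]; ring
    rw [hdiff, hDB, hg]
    exact ⟨B⁻¹ * (C ((i : ℚ) + 1) * (X * g)) * D⁻¹, by ring⟩

/-- The `n`-th convergent of the continued fraction
`1/(1 - x²/(1 - 2x²/(1 - 3x²/(1 - ...))))` agrees with the ordinary generating
function of the aerated double factorials (`a (2m) = (2m)!/(2^m m!)`,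
`a (2m+1) = 0`) in its first `n+1` coefficients. -/
theorem aerated_double_factorial_cf (n j : ℕ) (hj : j ≤ n) :
    PowerSeries.coeff j (cfAux n 1) =
      (if j % 2 = 0 then (j.factorial : ℚ) / (2 ^ (j / 2) * ((j / 2).factorial : ℚ)) else 0) := by
  have h := key_dvd n 0
  rw [X_pow_dvd_iff] at h
  have h0 : uS 0 = 1 := rfl
  have hc := h j (by omega)
  rw [h0, inv_one, mul_one, map_sub, sub_eq_zero] at hc
  rw [hc, coeff_uS_succ]
  simp only [dfc, Nat.add_zero, Nat.factorial_zero, Nat.cast_one, mul_one]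
end
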